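/- arXiv:2201.05948 — 2 statements merged into one kernel-verified Lean document; each statement's English description precedes it below -/
import Mathlib

section
/- Disconjugacy equals unique two-point interpolation (Theorem 4.2, (i)⇔(ii)): Assume Hypothesis (H) and let λ ∈ ℝ. Then τ − λ is disconjugate on (a,b) if and only if for every pair of points x₁, x₂ ∈ (a,b) with x₁ ≠ x₂ and arbitrary values u₁, u₂ ∈ ℝ there exists a unique real-valued solution u* of (τ − λ)u = 0 on (a,b) such that u*(x₁) = u₁ and u*(x₂) = u₂. -/
open MeasureTheory Set Filter intervalIntegral

noncomputable section

/-- The open interval of real numbers determined by extended-real endpoints `a`, `b`. -/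
def EI (a b : EReal) : Set ℝ := {x : ℝ | a < (x : EReal) ∧ (x : EReal) < b}

/-- Hypothesis (H): `p, q, r, s` are real-valued measurable on `(a,b)`, `p > 0` and `r > 0`
a.e. on `(a,b)`, and `1/p, q, r, s ∈ L¹_loc((a,b); dx)`. -/
structure SLH (a b : EReal) (p q r s : ℝ → ℝ) : Prop where
  hab : a < b
  measp : Measurable p
  measq : Measurable q
  measr : Measurable r
  meass : Measurable s
  ppos : ∀ᵐ x ∂(volume : Measure ℝ), x ∈ EI a b → 0 < p x
  rpos : ∀ᵐ x ∂(volume : Measure ℝ), x ∈ EI a b → 0 < r x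
  invp_loc : LocallyIntegrableOn (fun x => 1 / p x) (EI a b) volume
  q_loc : LocallyIntegrableOn q (EI a b) volume
  r_loc : LocallyIntegrableOn r (EI a b) volume
  s_loc : LocallyIntegrableOn s (EI a b) volume

/-- `f` is locally absolutely continuous on the interval `I` with a.e. derivative `fd`. -/
def HasAEDerivOn (I : Set ℝ) (f fd : ℝ → ℝ) : Prop :=
  ∀ x ∈ I, ∀ y ∈ I,
    IntervalIntegrable fd volume x y ∧ f y - f x = ∫ t in x..y, fd t

/-- `f ∈ 𝔇_τ(I)`: `f` is locally AC on `I` with a.e. derivative `fd`, the first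
quasi-derivative `f1 = p (f' + s f)` (a.e.) is locally AC with a.e. derivative `f1d`. -/
def InDomTau (I : Set ℝ) (p s : ℝ → ℝ) (f fd f1 f1d : ℝ → ℝ) : Prop :=
  HasAEDerivOn I f fd ∧
    (∀ᵐ t ∂(volume : Measure ℝ), t ∈ I → f1 t = p t * (fd t + s t * f t)) ∧
    HasAEDerivOn I f1 f1d

/-- The differential expression `τ f = (1/r) (−(f^[1])′ + s f^[1] + q f)`. -/
def tauApp (q r s : ℝ → ℝ) (f f1 f1d : ℝ → ℝ) (t : ℝ) : ℝ :=
  (1 / r t) * (-f1d t + s t * f1 t + q t * f t)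

/-- `u` (with data `ud, u1, u1d`) is a real solution of `(τ - lam) u = 0` on `I`. -/
def IsSolutionWith (I : Set ℝ) (p q r s : ℝ → ℝ) (lam : ℝ) (u ud u1 u1d : ℝ → ℝ) : Prop :=
  InDomTau I p s u ud u1 u1d ∧
    ∀ᵐ t ∂(volume : Measure ℝ), t ∈ I → tauApp q r s u u1 u1d t = lam * u t

/-- `u` is a real solution of `(τ - lam) u = 0` on `I`. -/
def IsSolution (I : Set ℝ) (p q r s : ℝ → ℝ) (lam : ℝ) (u : ℝ → ℝ) : Prop :=
  ∃ ud u1 u1d, IsSolutionWith I p q r s lam u ud u1 u1d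

/-- Complex version: loc AC with a.e. derivative. -/
def HasAEDerivOnC (I : Set ℝ) (f fd : ℝ → ℂ) : Prop :=
  ∀ x ∈ I, ∀ y ∈ I,
    IntervalIntegrable fd volume x y ∧ f y - f x = ∫ t in x..y, fd t

/-- Complex version of `InDomTau`. -/
def InDomTauC (I : Set ℝ) (p s : ℝ → ℝ) (f fd f1 f1d : ℝ → ℂ) : Prop :=
  HasAEDerivOnC I f fd ∧
    (∀ᵐ t ∂(volume : Measure ℝ), t ∈ I → f1 t = (p t : ℂ) * (fd t + (s t : ℂ) * f t)) ∧
    HasAEDerivOnC I f1 f1d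

/-- Complex version of `τ`. -/
def tauAppC (q r s : ℝ → ℝ) (f f1 f1d : ℝ → ℂ) (t : ℝ) : ℂ :=
  (1 / (r t : ℂ)) * (-f1d t + (s t : ℂ) * f1 t + (q t : ℂ) * f t)

/-- `u` (with data) is a complex solution of `(τ - z) u = 0` on `I`. -/
def IsSolutionWithC (I : Set ℝ) (p q r s : ℝ → ℝ) (z : ℂ) (u ud u1 u1d : ℝ → ℂ) : Prop :=
  InDomTauC I p s u ud u1 u1d ∧
    ∀ᵐ t ∂(volume : Measure ℝ), t ∈ I → tauAppC q r s u u1 u1d t = z * u t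

/-- `u` does not vanish identically on `I`. -/
def NontrivOn (I : Set ℝ) (u : ℝ → ℝ) : Prop := ∃ x ∈ I, u x ≠ 0

/-- Linear independence of two real functions on `I`. -/
def LinIndepOn (I : Set ℝ) (u v : ℝ → ℝ) : Prop :=
  ∀ c₁ c₂ : ℝ, (∀ x ∈ I, c₁ * u x + c₂ * v x = 0) → c₁ = 0 ∧ c₂ = 0

/-- `τ - lam` is disconjugate on `I`: every nontrivial real solution has at most one zero. -/
def Disconjugate (I : Set ℝ) (p q r s : ℝ → ℝ) (lam : ℝ) : Prop :=
  ∀ u : ℝ → ℝ, IsSolution I p q r s lam u → NontrivOn I u →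
    ∀ x ∈ I, ∀ y ∈ I, u x = 0 → u y = 0 → x = y

/-- `f` has compact support contained in `I`. -/
def SuppIn (I : Set ℝ) (f : ℝ → ℂ) : Prop :=
  ∃ K : Set ℝ, IsCompact K ∧ K ⊆ I ∧ ∀ x ∈ I \ K, f x = 0

/-- Membership (with derivative data) in the domain of the pre-minimal operator `Ṫ`. -/
def InDomPreMin (a b : EReal) (p q r s : ℝ → ℝ) (f fd f1 f1d : ℝ → ℂ) : Prop :=
  InDomTauC (EI a b) p s f fd f1 f1d ∧ SuppIn (EI a b) f ∧
    IntegrableOn (fun x => r x * ‖f x‖ ^ 2) (EI a b) volume ∧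
    IntegrableOn (fun x => r x * ‖tauAppC q r s f f1 f1d x‖ ^ 2) (EI a b) volume

/-- `(f, Ṫ f) ≥ lam0 ‖f‖²` for all `f ∈ dom(Ṫ)`. -/
def PreMinLowerBound (a b : EReal) (p q r s : ℝ → ℝ) (lam0 : ℝ) : Prop :=
  ∀ f fd f1 f1d : ℝ → ℂ, InDomPreMin a b p q r s f fd f1 f1d →
    lam0 * (∫ x in EI a b, r x * ‖f x‖ ^ 2) ≤
      (∫ x in EI a b, (r x : ℂ) * (starRingEnd ℂ (f x) * tauAppC q r s f f1 f1d x)).re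

/-- Membership (with derivative data) in the domain of the maximal operator `T_max`. -/
def InDomMax (a b : EReal) (p q r s : ℝ → ℝ) (g gd g1 g1d : ℝ → ℂ) : Prop :=
  InDomTauC (EI a b) p s g gd g1 g1d ∧
    IntegrableOn (fun x => r x * ‖g x‖ ^ 2) (EI a b) volume ∧
    IntegrableOn (fun x => r x * ‖tauAppC q r s g g1 g1d x‖ ^ 2) (EI a b) volume

/-- `τ - lam` is oscillatory at `b`: some nontrivial real solution has zeros accumulating at `b`. -/
def OscillatoryAtB (a b : EReal) (p q r s : ℝ → ℝ) (lam : ℝ) : Prop :=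
  ∃ u : ℝ → ℝ, IsSolution (EI a b) p q r s lam u ∧ NontrivOn (EI a b) u ∧
    ∀ c ∈ EI a b, ∃ x ∈ EI a b, c < x ∧ u x = 0

/-- `τ - lam` is oscillatory at `a`. -/
def OscillatoryAtA (a b : EReal) (p q r s : ℝ → ℝ) (lam : ℝ) : Prop :=
  ∃ u : ℝ → ℝ, IsSolution (EI a b) p q r s lam u ∧ NontrivOn (EI a b) u ∧
    ∀ c ∈ EI a b, ∃ x ∈ EI a b, x < c ∧ u x = 0

/-- The filter of real numbers tending to the endpoint `a` from the right. -/
def atEndA (a : EReal) : Filter ℝ :=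
  Filter.comap (fun x : ℝ => (x : EReal)) (nhdsWithin a (Set.Ioi a))

/-- The filter of real numbers tending to the endpoint `b` from the left. -/
def atEndB (b : EReal) : Filter ℝ :=
  Filter.comap (fun x : ℝ => (x : EReal)) (nhdsWithin b (Set.Iio b))

/-- `u` lies in `L²((a,b); r dx)` near `b`. -/
def L2NearB (a b : EReal) (r : ℝ → ℝ) (u : ℝ → ℂ) : Prop :=
  ∀ c ∈ EI a b, IntegrableOn (fun x => r x * ‖u x‖ ^ 2) (EI (c : EReal) b) volume

/-- `u` lies in `L²((a,b); r dx)` near `a`. -/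
def L2NearA (a b : EReal) (r : ℝ → ℝ) (u : ℝ → ℂ) : Prop :=
  ∀ c ∈ EI a b, IntegrableOn (fun x => r x * ‖u x‖ ^ 2) (EI a (c : EReal)) volume

/-- `τ` is in the limit circle case at `b`. -/
def LimitCircleAtB (a b : EReal) (p q r s : ℝ → ℝ) : Prop :=
  ∀ z : ℂ, ∀ u ud u1 u1d : ℝ → ℂ,
    IsSolutionWithC (EI a b) p q r s z u ud u1 u1d → L2NearB a b r u

/-- `τ` is in the limit circle case at `a`. -/
def LimitCircleAtA (a b : EReal) (p q r s : ℝ → ℝ) : Prop :=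
  ∀ z : ℂ, ∀ u ud u1 u1d : ℝ → ℂ,
    IsSolutionWithC (EI a b) p q r s z u ud u1 u1d → L2NearA a b r u

/-- `u` is a principal solution of `(τ - lam) u = 0` at `b` on the interval `I`. -/
def PrincipalAtB (I : Set ℝ) (b : EReal) (p q r s : ℝ → ℝ) (lam : ℝ) (u : ℝ → ℝ) : Prop :=
  IsSolution I p q r s lam u ∧ NontrivOn I u ∧
    ∀ v : ℝ → ℝ, IsSolution I p q r s lam v → LinIndepOn I u v →
      Tendsto (fun x => u x / v x) (atEndB b) (nhds 0)

/-- `u` is a principal solution of `(τ - lam) u = 0` at `a` on the interval `I`. -/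
def PrincipalAtA (I : Set ℝ) (a : EReal) (p q r s : ℝ → ℝ) (lam : ℝ) (u : ℝ → ℝ) : Prop :=
  IsSolution I p q r s lam u ∧ NontrivOn I u ∧
    ∀ v : ℝ → ℝ, IsSolution I p q r s lam v → LinIndepOn I u v →
      Tendsto (fun x => u x / v x) (atEndA a) (nhds 0)

/-- `v` is a nonprincipal solution of `(τ - lam) u = 0` at `b` on the interval `I`. -/
def NonprincipalAtB (I : Set ℝ) (b : EReal) (p q r s : ℝ → ℝ) (lam : ℝ) (v : ℝ → ℝ) : Prop :=
  IsSolution I p q r s lam v ∧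
    ∃ u : ℝ → ℝ, PrincipalAtB I b p q r s lam u ∧ LinIndepOn I u v

end

/-!
Writing `τ u = λ u` as the first-order system `(u, u^[1])' = A(t) (u, u^[1])` with a locally
integrable coefficient matrix `A`, the `n`-th Picard iterate on a compact subinterval `[c, d]` is
Lipschitz with constant `(∫_c^d ‖A‖)^n / n!`, so some iterate contracts: initial value problems are
uniquely solvable on compact subintervals, and these solutions glue to solutions on `(a, b)`.

If `τ - λ` is disconjugate, two solutions agreeing at `x₁ ≠ x₂` differ by a solution with two
zeros, so they coincide. The solution with `u(x₁) = 0`, `u^[1](x₁) = 1` does not vanish at `x₂`,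
for otherwise it would vanish identically and then so would its quasi-derivative; adding a
suitable multiple of it to a solution with `u(x₁) = 1` interpolates arbitrary data. Conversely, a
nontrivial solution with two zeros and the zero solution would both interpolate zero data.
-/

open Function
open scoped Nat NNReal Topology Interval

section Calculus

variable {E : Type*} [NormedAddCommGroup E] [NormedSpace ℝ E]

theorem continuousOn_of_sub_eq_intervalIntegral {f g : ℝ → E} {c d : ℝ}
    (hg : IntervalIntegrable g volume c d) (h : ∀ t ∈ uIcc c d, f t - f c = ∫ τ in c..t, g τ) :
    ContinuousOn f (uIcc c d) :=
  ((continuousOn_const (c := f c)).add (continuousOn_primitive_interval' hg left_mem_uIcc)).congr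
    fun t ht => by simp only [Pi.add_apply, ← h t ht, add_sub_cancel]

theorem continuousOn_integral_uIoc_of_nonneg {g : ℝ → ℝ} {a b : ℝ}
    (hg : IntervalIntegrable g volume a b) (hg0 : ∀ τ, 0 ≤ g τ) :
    ContinuousOn (fun τ => ∫ σ in Ι a τ, g σ) (uIcc a b) :=
  (continuousOn_primitive_interval' hg left_mem_uIcc).abs.congr fun τ _ => by
    dsimp only
    rw [abs_intervalIntegral_eq, abs_of_nonneg (setIntegral_nonneg measurableSet_uIoc
      fun σ _ => hg0 σ)]

theorem IntervalIntegrable.ae_eq_zero_of_forall_intervalIntegral_eq_zero [CompleteSpace E]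
    {f : ℝ → E} {c d : ℝ} (hf : IntervalIntegrable f volume c d)
    (h : ∀ t ∈ Icc c d, ∫ τ in c..t, f τ = 0) : ∀ᵐ t, t ∈ Ioo c d → f t = 0 := by
  filter_upwards [hf.ae_hasDerivAt_integral] with t ht htcd
  have hderiv := ht (Ioo_subset_Icc_self.trans Icc_subset_uIcc htcd) c left_mem_uIcc
  have hzero : (fun x => ∫ τ in c..x, f τ) =ᶠ[𝓝 t] fun _ => 0 :=
    eventually_of_mem (Ioo_mem_nhds htcd.1 htcd.2) fun x hx => h x (Ioo_subset_Icc_self hx)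
  exact hderiv.unique ((hasDerivAt_const t 0).congr_of_eventuallyEq hzero)

theorem MeasureTheory.LocallyIntegrableOn.smul_const {f : ℝ → ℝ} {S : Set ℝ}
    (hf : LocallyIntegrableOn f S) (v : E) : LocallyIntegrableOn (fun t => f t • v) S :=
  fun x hx => let ⟨U, hU, hfU⟩ := hf x hx; ⟨U, hU, hfU.smul_const v⟩

theorem MeasureTheory.IntegrableOn.clm_apply_of_continuousOn {F : Type*} [NormedAddCommGroup F]
    [NormedSpace ℝ F] {A : ℝ → E →L[ℝ] F} {s : Set ℝ} (hs : IsCompact s) (hA : IntegrableOn A s)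
    {v : ℝ → E} (hv : ContinuousOn v s) : IntegrableOn (fun τ => A τ (v τ)) s := by
  obtain ⟨C, hC⟩ := hs.exists_bound_of_continuousOn hv
  refine (hA.norm.mul_const C).mono' ?_ ?_
  · exact isBoundedBilinearMap_apply.continuous.comp_aestronglyMeasurable₂
      hA.aestronglyMeasurable (hv.aestronglyMeasurable hs.measurableSet)
  · filter_upwards [ae_restrict_mem hs.measurableSet] with τ hτ
    exact (A τ).le_opNorm_of_le (hC τ hτ)

end Calculus

theorem integral_mul_intervalIntegral_pow {g : ℝ → ℝ} {a b c : ℝ}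
    (hg : IntervalIntegrable g volume a b) (hc : c ∈ uIcc a b) (n : ℕ) :
    ∫ τ in a..b, g τ * (∫ σ in c..τ, g σ) ^ n =
      ((∫ σ in c..b, g σ) ^ (n + 1) - (∫ σ in c..a, g σ) ^ (n + 1)) / (n + 1) := by
  set G := fun τ => ∫ σ in c..τ, g σ
  have hG : AbsolutelyContinuousOnInterval G a b :=
    hg.absolutelyContinuousOnInterval_intervalIntegral hc
  have hGpow : ∀ k : ℕ, AbsolutelyContinuousOnInterval (fun τ => G τ ^ (k + 1)) a b := by
    intro k
    induction k with
    | zero => simpa using hG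
    | succ k ih => simpa only [pow_succ] using ih.fun_mul hG
  rw [eq_div_iff (by positivity), ← intervalIntegral.integral_mul_const,
    ← (hGpow n).integral_deriv_eq_sub]
  refine integral_congr_ae ?_
  filter_upwards [hg.ae_hasDerivAt_integral] with τ hτ hτI
  rw [((hτ (uIoc_subset_uIcc hτI) c hc).fun_pow (n + 1)).deriv]
  push_cast
  ring

theorem integral_uIoc_mul_integral_uIoc_pow {g : ℝ → ℝ} {x₀ t : ℝ}
    (hg : IntervalIntegrable g volume x₀ t) (n : ℕ) :
    ∫ τ in Ι x₀ t, g τ * (∫ σ in Ι x₀ τ, g σ) ^ n = (∫ σ in Ι x₀ t, g σ) ^ (n + 1) / (n + 1) := by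
  rcases le_total x₀ t with h | h
  · have hΙ : ∀ τ ∈ Ioc x₀ t, ∫ σ in Ι x₀ τ, g σ = ∫ σ in x₀..τ, g σ := fun τ hτ => by
      rw [uIoc_of_le hτ.1.le, integral_of_le hτ.1.le]
    rw [uIoc_of_le h, setIntegral_congr_fun measurableSet_Ioc fun τ hτ => by rw [hΙ τ hτ],
      ← integral_of_le h, ← integral_of_le h, integral_mul_intervalIntegral_pow hg left_mem_uIcc]
    simp
  · have hΙ : ∀ τ ∈ Ioc t x₀, ∫ σ in Ι x₀ τ, g σ = -∫ σ in x₀..τ, g σ := fun τ hτ => by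
      rw [uIoc_of_ge hτ.2, ← integral_of_le hτ.2, integral_symm]
    rw [uIoc_of_ge h, setIntegral_congr_fun measurableSet_Ioc fun τ hτ => by
      rw [hΙ τ hτ, neg_pow, mul_left_comm], MeasureTheory.integral_const_mul, ← integral_of_le h,
      ← integral_of_le h, integral_mul_intervalIntegral_pow hg.symm right_mem_uIcc,
      integral_symm x₀ t, integral_same, neg_pow _ (n + 1), pow_succ (-1 : ℝ)]
    ring

section LinearODE

variable {E : Type*} [NormedAddCommGroup E] [NormedSpace ℝ E] {A : ℝ → E →L[ℝ] E}

/-- Carathéodory solutions of `w' = A(t) w` on `S`, in integrated form. -/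
def IsLinearODESolutionOn (A : ℝ → E →L[ℝ] E) (S : Set ℝ) (w : ℝ → E) : Prop :=
  ∀ x ∈ S, ∀ y ∈ S, IntervalIntegrable (fun τ => A τ (w τ)) volume x y ∧
    w y - w x = ∫ τ in x..y, A τ (w τ)

namespace IsLinearODESolutionOn

variable {S T : Set ℝ} {v w : ℝ → E}

theorem mono (hw : IsLinearODESolutionOn A T w) (hST : S ⊆ T) : IsLinearODESolutionOn A S w :=
  fun x hx y hy => hw x (hST hx) y (hST hy)

theorem congr (hv : IsLinearODESolutionOn A S v) (hS : S.OrdConnected) (h : EqOn w v S) :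
    IsLinearODESolutionOn A S w := by
  intro x hx y hy
  have hAwv : EqOn (fun τ => A τ (v τ)) (fun τ => A τ (w τ)) (uIcc x y) := fun τ hτ => by
    simp only [h (hS.uIcc_subset hx hy hτ)]
  obtain ⟨hint, heq⟩ := hv x hx y hy
  exact ⟨hint.congr (hAwv.mono uIoc_subset_uIcc), by rw [h hx, h hy, heq, integral_congr hAwv]⟩

theorem of_forall_base {x₀ : ℝ}
    (h : ∀ x ∈ S, IntervalIntegrable (fun τ => A τ (w τ)) volume x₀ x ∧
      w x - w x₀ = ∫ τ in x₀..x, A τ (w τ)) :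
    IsLinearODESolutionOn A S w := by
  intro x hx y hy
  obtain ⟨hix, hx⟩ := h x hx
  obtain ⟨hiy, hy⟩ := h y hy
  refine ⟨hix.symm.trans hiy, ?_⟩
  rw [← integral_interval_sub_left hiy hix, ← hx, ← hy, sub_sub_sub_cancel_right]

theorem continuousOn_Icc {c d : ℝ} (hw : IsLinearODESolutionOn A (Icc c d) w) (hcd : c ≤ d) :
    ContinuousOn w (Icc c d) := by
  rw [← uIcc_of_le hcd] at hw ⊢
  exact continuousOn_of_sub_eq_intervalIntegral (hw c left_mem_uIcc d right_mem_uIcc).1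
    fun t ht => (hw c left_mem_uIcc t ht).2

end IsLinearODESolutionOn

end LinearODE

section Picard

variable {E : Type*} [NormedAddCommGroup E] [NormedSpace ℝ E] {A : ℝ → E →L[ℝ] E}
  {c d x₀ : ℝ} (hA : IntegrableOn A (Icc c d)) (hx₀ : x₀ ∈ Icc c d) (w₀ : E)

include hA hx₀ in
theorem continuousOn_picard_Icc {v : ℝ → E} (hv : ContinuousOn v (Icc c d)) :
    ContinuousOn (ODE.picard (A ·) x₀ w₀ v) (Icc c d) := by
  have hcd : c ≤ d := hx₀.1.trans hx₀.2
  have hint := (intervalIntegrable_iff_integrableOn_Icc_of_le hcd).2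
    (hA.clm_apply_of_continuousOn isCompact_Icc hv)
  rw [← uIcc_of_le hcd] at hx₀ ⊢
  exact continuousOn_const.add (continuousOn_primitive_interval' hint hx₀)

noncomputable def picardIcc (v : C(Icc c d, E)) : C(Icc c d, E) :=
  ⟨(Icc c d).domRestrict (ODE.picard (A ·) x₀ w₀ (IccExtend (hx₀.1.trans hx₀.2) v)),
    (continuousOn_picard_Icc hA hx₀ w₀ (v.continuous.Icc_extend').continuousOn).domRestrict⟩

theorem picardIcc_apply (v : C(Icc c d, E)) (t : Icc c d) :
    picardIcc hA hx₀ w₀ v t = w₀ + ∫ τ in x₀..t, A τ (IccExtend (hx₀.1.trans hx₀.2) v τ) :=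
  rfl

theorem dist_iterate_picardIcc_apply_le (n : ℕ) (v v' : C(Icc c d, E)) (t : Icc c d) :
    dist ((picardIcc hA hx₀ w₀)^[n] v t) ((picardIcc hA hx₀ w₀)^[n] v' t) ≤
      (∫ τ in Ι x₀ t, ‖A τ‖) ^ n / n ! * dist v v' := by
  induction n generalizing t with
  | zero => simpa using ContinuousMap.dist_apply_le_dist t
  | succ n ih =>
    have hsub : uIcc x₀ (t : ℝ) ⊆ Icc c d := uIcc_subset_Icc hx₀ t.2
    have hint (u : C(Icc c d, E)) :
        IntervalIntegrable (fun τ => A τ (IccExtend (hx₀.1.trans hx₀.2) u τ)) volume x₀ t :=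
      ((hA.mono_set hsub).clm_apply_of_continuousOn isCompact_uIcc
        u.continuous.Icc_extend'.continuousOn).intervalIntegrable
    have hnorm : IntervalIntegrable (fun τ => ‖A τ‖) volume x₀ t :=
      IntegrableOn.intervalIntegrable (hA.mono_set hsub).norm
    have hcont := continuousOn_integral_uIoc_of_nonneg hnorm fun τ => norm_nonneg (A τ)
    rw [iterate_succ_apply', iterate_succ_apply', dist_eq_norm, picardIcc_apply, picardIcc_apply,
      add_sub_add_left_eq_sub, ← integral_sub (hint _) (hint _), norm_intervalIntegral_eq]
    calc _ ≤ ∫ τ in Ι x₀ t, ‖A τ‖ * (∫ σ in Ι x₀ τ, ‖A σ‖) ^ n * (dist v v' / n !) := by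
          refine norm_integral_le_of_norm_le ((hnorm.mul_continuousOn (hcont.pow n)).mul_const
            _).def' ?_
          filter_upwards [ae_restrict_mem measurableSet_uIoc] with τ hτ
          have hτ' : τ ∈ Icc c d := hsub (uIoc_subset_uIcc hτ)
          rw [← map_sub, IccExtend_of_mem _ _ hτ', IccExtend_of_mem _ _ hτ']
          calc _ ≤ ‖A τ‖ * dist ((picardIcc hA hx₀ w₀)^[n] v ⟨τ, hτ'⟩)
                ((picardIcc hA hx₀ w₀)^[n] v' ⟨τ, hτ'⟩) := by
                rw [dist_eq_norm]; exact (A τ).le_opNorm _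
            _ ≤ _ := mul_le_mul_of_nonneg_left (ih ⟨τ, hτ'⟩) (norm_nonneg _)
            _ = _ := by ring
      _ = _ := by
          rw [MeasureTheory.integral_mul_const, integral_uIoc_mul_integral_uIoc_pow hnorm,
            Nat.factorial_succ]
          push_cast
          field_simp

theorem dist_iterate_picardIcc_le (n : ℕ) (v v' : C(Icc c d, E)) :
    dist ((picardIcc hA hx₀ w₀)^[n] v) ((picardIcc hA hx₀ w₀)^[n] v') ≤
      (∫ τ in Icc c d, ‖A τ‖) ^ n / n ! * dist v v' := by
  have hL : 0 ≤ ∫ τ in Icc c d, ‖A τ‖ := integral_nonneg fun τ => norm_nonneg (A τ)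
  refine (ContinuousMap.dist_le (by positivity)).2 fun t =>
    (dist_iterate_picardIcc_apply_le hA hx₀ w₀ n v v' t).trans ?_
  refine mul_le_mul_of_nonneg_right (div_le_div_of_nonneg_right (pow_le_pow_left₀
    (setIntegral_nonneg measurableSet_uIoc fun τ _ => norm_nonneg (A τ)) ?_ n) (by positivity))
    dist_nonneg
  exact setIntegral_mono_set hA.norm (ae_of_all _ fun τ => norm_nonneg (A τ))
    (uIoc_subset_uIcc.trans (uIcc_subset_Icc hx₀ t.2)).eventuallyLE

theorem exists_contractingWith_iterate_picardIcc :
    ∃ (n : ℕ) (K : ℝ≥0), ContractingWith K (picardIcc hA hx₀ w₀)^[n] := by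
  have hL : 0 ≤ ∫ τ in Icc c d, ‖A τ‖ := integral_nonneg fun τ => norm_nonneg (A τ)
  obtain ⟨n, hn⟩ := (FloorSemiring.tendsto_pow_div_factorial_atTop
    (∫ τ in Icc c d, ‖A τ‖)).eventually (gt_mem_nhds zero_lt_one) |>.exists
  exact ⟨n, ⟨_, by positivity⟩, hn,
    LipschitzWith.of_dist_le_mul (dist_iterate_picardIcc_le hA hx₀ w₀ n)⟩

theorem isLinearODESolutionOn_of_isFixedPt_picardIcc {v : C(Icc c d, E)}
    (hv : IsFixedPt (picardIcc hA hx₀ w₀) v) :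
    IccExtend (hx₀.1.trans hx₀.2) v x₀ = w₀ ∧
      IsLinearODESolutionOn A (Icc c d) (IccExtend (hx₀.1.trans hx₀.2) v) := by
  set w := IccExtend (hx₀.1.trans hx₀.2) v
  have hw (t : ℝ) (ht : t ∈ Icc c d) : w t = w₀ + ∫ τ in x₀..t, A τ (w τ) := by
    rw [show w t = v ⟨t, ht⟩ from IccExtend_of_mem _ _ ht, ← hv]
    rfl
  have hw₀ : w x₀ = w₀ := by simpa using hw x₀ hx₀
  refine ⟨hw₀, IsLinearODESolutionOn.of_forall_base (x₀ := x₀) fun t ht => ⟨?_, ?_⟩⟩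
  · exact ((hA.mono_set (uIcc_subset_Icc hx₀ ht)).clm_apply_of_continuousOn isCompact_uIcc
      v.continuous.Icc_extend'.continuousOn).intervalIntegrable
  · rw [hw t ht, hw₀, add_sub_cancel_left]

theorem isFixedPt_picardIcc_of_isLinearODESolutionOn {w : ℝ → E}
    (hw : IsLinearODESolutionOn A (Icc c d) w) (hw₀ : w x₀ = w₀) :
    IsFixedPt (picardIcc hA hx₀ w₀)
      ⟨(Icc c d).domRestrict w, (hw.continuousOn_Icc (hx₀.1.trans hx₀.2)).domRestrict⟩ := by
  ext t
  rw [picardIcc_apply, integral_congr (g := fun τ => A τ (w τ)) fun τ hτ => by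
    rw [IccExtend_of_mem _ _ (uIcc_subset_Icc hx₀ t.2 hτ)]; rfl, ← (hw x₀ hx₀ t t.2).2, hw₀,
    add_sub_cancel]
  rfl

include hA hx₀ in
theorem exists_isLinearODESolutionOn_Icc [CompleteSpace E] :
    ∃ w, w x₀ = w₀ ∧ IsLinearODESolutionOn A (Icc c d) w :=
  let ⟨_, _, hK⟩ := exists_contractingWith_iterate_picardIcc hA hx₀ w₀
  ⟨_, isLinearODESolutionOn_of_isFixedPt_picardIcc hA hx₀ w₀ hK.isFixedPt_fixedPoint_iterate⟩

include hA hx₀ in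
theorem IsLinearODESolutionOn.eqOn_Icc {w w' : ℝ → E} (hw : IsLinearODESolutionOn A (Icc c d) w)
    (hw' : IsLinearODESolutionOn A (Icc c d) w') (h : w x₀ = w' x₀) : EqOn w w' (Icc c d) := by
  obtain ⟨n, K, hK⟩ := exists_contractingWith_iterate_picardIcc hA hx₀ (w x₀)
  have := hK.fixedPoint_unique'
    ((isFixedPt_picardIcc_of_isLinearODESolutionOn hA hx₀ _ hw rfl).iterate n)
    ((isFixedPt_picardIcc_of_isLinearODESolutionOn hA hx₀ _ hw' h.symm).iterate n)
  exact fun t ht => congrArg (· ⟨t, ht⟩) this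

end Picard

theorem exists_isLinearODESolutionOn {E : Type*} [NormedAddCommGroup E] [NormedSpace ℝ E]
    [CompleteSpace E] {A : ℝ → E →L[ℝ] E} {S : Set ℝ} (hS : S.OrdConnected)
    (hA : LocallyIntegrableOn A S) {x₀ : ℝ} (hx₀ : x₀ ∈ S) (w₀ : E) :
    ∃ w, w x₀ = w₀ ∧ IsLinearODESolutionOn A S w := by
  have hAS (x : ℝ) (hx : x ∈ S) : IntegrableOn A (uIcc x₀ x) :=
    hA.integrableOn_compact_subset (hS.uIcc_subset hx₀ hx) isCompact_uIcc
  choose! W hW₀ hW using fun x hx => exists_isLinearODESolutionOn_Icc (hAS x hx) left_mem_uIcc w₀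
  -- The global solution takes its value at `z` from the local solution `W z` on `[[x₀, z]]`.
  have hWW (x : ℝ) (hx : x ∈ S) : EqOn (fun z => W z z) (W x) (uIcc x₀ x) := fun z hz => by
    have hzS : z ∈ S := hS.uIcc_subset hx₀ hx hz
    exact (hW z hzS).eqOn_Icc (hAS z hzS) left_mem_uIcc
      ((hW x hx).mono (uIcc_subset_uIcc left_mem_uIcc hz)) (by rw [hW₀ z hzS, hW₀ x hx])
      right_mem_uIcc
  exact ⟨fun z => W z z, hW₀ x₀ hx₀, IsLinearODESolutionOn.of_forall_base fun x hx =>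
    ((hW x hx).congr ordConnected_uIcc (hWW x hx)) x₀ left_mem_uIcc x right_mem_uIcc⟩

theorem isOpen_EI (a b : EReal) : IsOpen (EI a b) :=
  isOpen_Ioo.preimage continuous_coe_real_ereal

theorem ordConnected_EI (a b : EReal) : (EI a b).OrdConnected :=
  ⟨fun _ hx _ hy _ ht => ⟨hx.1.trans_le (EReal.coe_le_coe_iff.2 ht.1),
    (EReal.coe_le_coe_iff.2 ht.2).trans_lt hy.2⟩⟩

section SturmLiouville

variable {I : Set ℝ} {p q r s : ℝ → ℝ} {lam : ℝ}

theorem HasAEDerivOn.const_mul_add_const_mul {f fd g gd : ℝ → ℝ} (hf : HasAEDerivOn I f fd)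
    (hg : HasAEDerivOn I g gd) (α β : ℝ) :
    HasAEDerivOn I (fun t => α * f t + β * g t) (fun t => α * fd t + β * gd t) := by
  intro x hx y hy
  obtain ⟨hfi, hfe⟩ := hf x hx y hy
  obtain ⟨hgi, hge⟩ := hg x hx y hy
  refine ⟨(hfi.const_mul α).add (hgi.const_mul β), ?_⟩
  rw [integral_add (hfi.const_mul α) (hgi.const_mul β), intervalIntegral.integral_const_mul,
    intervalIntegral.integral_const_mul, ← hfe, ← hge]
  ring

theorem IsSolutionWith.const_mul_add_const_mul {u ud u1 u1d v vd v1 v1d : ℝ → ℝ}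
    (hu : IsSolutionWith I p q r s lam u ud u1 u1d)
    (hv : IsSolutionWith I p q r s lam v vd v1 v1d) (α β : ℝ) :
    IsSolutionWith I p q r s lam (fun t => α * u t + β * v t) (fun t => α * ud t + β * vd t)
      (fun t => α * u1 t + β * v1 t) (fun t => α * u1d t + β * v1d t) := by
  obtain ⟨⟨hu, hu1, hu1d⟩, hτu⟩ := hu
  obtain ⟨⟨hv, hv1, hv1d⟩, hτv⟩ := hv
  refine ⟨⟨hu.const_mul_add_const_mul hv α β, ?_, hu1d.const_mul_add_const_mul hv1d α β⟩, ?_⟩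
  · filter_upwards [hu1, hv1] with t hut hvt ht
    rw [hut ht, hvt ht]
    ring
  · filter_upwards [hτu, hτv] with t hut hvt ht
    simp only [tauApp] at hut hvt ⊢
    linear_combination α * hut ht + β * hvt ht

theorem IsSolution.const_mul_add_const_mul {u v : ℝ → ℝ} (hu : IsSolution I p q r s lam u)
    (hv : IsSolution I p q r s lam v) (α β : ℝ) :
    IsSolution I p q r s lam (fun t => α * u t + β * v t) :=
  let ⟨_, _, _, hu⟩ := hu
  let ⟨_, _, _, hv⟩ := hv
  ⟨_, _, _, hu.const_mul_add_const_mul hv α β⟩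

theorem isSolution_zero : IsSolution I p q r s lam fun _ => 0 :=
  ⟨fun _ => 0, fun _ => 0, fun _ => 0,
    ⟨⟨fun _ _ _ _ => by simp, by simp, fun _ _ _ _ => by simp⟩, by simp [tauApp]⟩⟩

theorem InDomTau.quasiDeriv_eqOn_zero {f fd f1 f1d : ℝ → ℝ} (hI : IsOpen I)
    (hf : InDomTau I p s f fd f1 f1d) (h : EqOn f 0 I) : EqOn f1 0 I := by
  intro x hx
  obtain ⟨c, d, -, hcd_nhds, hcdI⟩ := exists_Icc_mem_subset_of_mem_nhds (hI.mem_nhds hx)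
  have hxcd : x ∈ Ioo c d := interior_Icc (a := c) ▸ mem_interior_iff_mem_nhds.2 hcd_nhds
  have hcd : c ≤ d := (hxcd.1.trans hxcd.2).le
  have huIcc : uIcc c d ⊆ I := (uIcc_of_le hcd).trans_subset hcdI
  have hc : c ∈ I := huIcc left_mem_uIcc
  obtain ⟨hf', hf1, hf1'⟩ := hf
  have hfd : ∀ᵐ t, t ∈ Ioo c d → fd t = 0 :=
    (hf' c hc d (huIcc right_mem_uIcc)).1.ae_eq_zero_of_forall_intervalIntegral_eq_zero
      fun t ht => by simp [← (hf' c hc t (hcdI ht)).2, h (hcdI ht), h hc]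
  have hf1_ae : f1 =ᵐ[volume.restrict (Ioo c d)] 0 := by
    rw [EventuallyEq, ae_restrict_iff' measurableSet_Ioo]
    filter_upwards [hfd, hf1] with t hfdt hf1t ht
    have htI : t ∈ I := hcdI (Ioo_subset_Icc_self ht)
    rw [hf1t htI, hfdt ht, h htI]
    simp
  have hf1_cont : ContinuousOn f1 (uIcc c d) := continuousOn_of_sub_eq_intervalIntegral
    (hf1' c hc d (huIcc right_mem_uIcc)).1 fun t ht => (hf1' c hc t (huIcc ht)).2
  exact Measure.eqOn_Ioo_of_ae_eq volume hf1_ae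
    (hf1_cont.mono (Ioo_subset_Icc_self.trans Icc_subset_uIcc)) continuousOn_const hxcd

theorem IsLinearODESolutionOn.hasAEDerivOn_comp {E : Type*} [NormedAddCommGroup E]
    [NormedSpace ℝ E] [CompleteSpace E] {A : ℝ → E →L[ℝ] E} {S : Set ℝ} {w : ℝ → E}
    (hw : IsLinearODESolutionOn A S w) (L : E →L[ℝ] ℝ) :
    HasAEDerivOn S (fun t => L (w t)) (fun t => L (A t (w t))) := fun x hx y hy =>
  let ⟨hi, he⟩ := hw x hx y hy
  ⟨⟨L.integrable_comp hi.1, L.integrable_comp hi.2⟩,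
    by rw [← map_sub, he, L.intervalIntegral_comp_comm hi]⟩

/-- The coefficients of the first-order system `(u, u^[1])' = slSystem (u, u^[1])` equivalent to
`τ u = λ u`: `u' = u^[1] / p - s u` and `(u^[1])' = s u^[1] + (q - λ r) u`. -/
noncomputable def slSystem (p q r s : ℝ → ℝ) (lam t : ℝ) : ℝ × ℝ →L[ℝ] ℝ × ℝ :=
  (1 / p t) • (ContinuousLinearMap.snd ℝ ℝ ℝ).prod 0 +
    s t • (-ContinuousLinearMap.fst ℝ ℝ ℝ).prod (ContinuousLinearMap.snd ℝ ℝ ℝ) +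
    (q t - lam * r t) • (0 : ℝ × ℝ →L[ℝ] ℝ).prod (ContinuousLinearMap.fst ℝ ℝ ℝ)

theorem slSystem_apply (t : ℝ) (w : ℝ × ℝ) :
    slSystem p q r s lam t w =
      (1 / p t * w.2 - s t * w.1, s t * w.2 + (q t - lam * r t) * w.1) := by
  simp only [slSystem]
  ext
  · simp
    ring
  · simp

theorem locallyIntegrableOn_slSystem (hp : LocallyIntegrableOn (fun t => 1 / p t) I)
    (hq : LocallyIntegrableOn q I) (hr : LocallyIntegrableOn r I)
    (hs : LocallyIntegrableOn s I) : LocallyIntegrableOn (slSystem p q r s lam) I :=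
  ((hp.smul_const ((ContinuousLinearMap.snd ℝ ℝ ℝ).prod 0)).add
    (hs.smul_const ((-ContinuousLinearMap.fst ℝ ℝ ℝ).prod (ContinuousLinearMap.snd ℝ ℝ ℝ)))).add
    ((hq.sub (hr.smul lam)).smul_const ((0 : ℝ × ℝ →L[ℝ] ℝ).prod (ContinuousLinearMap.fst ℝ ℝ ℝ)))

theorem IsLinearODESolutionOn.isSolutionWith {w : ℝ → ℝ × ℝ}
    (hw : IsLinearODESolutionOn (slSystem p q r s lam) I w) (hp : ∀ᵐ t, t ∈ I → p t ≠ 0)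
    (hr : ∀ᵐ t, t ∈ I → r t ≠ 0) :
    IsSolutionWith I p q r s lam (fun t => (w t).1) (fun t => (slSystem p q r s lam t (w t)).1)
      (fun t => (w t).2) (fun t => (slSystem p q r s lam t (w t)).2) := by
  refine ⟨⟨hw.hasAEDerivOn_comp (ContinuousLinearMap.fst ℝ ℝ ℝ), ?_,
    hw.hasAEDerivOn_comp (ContinuousLinearMap.snd ℝ ℝ ℝ)⟩, ?_⟩
  · filter_upwards [hp] with t hpt ht
    simp only [slSystem_apply]
    field_simp [hpt ht]
    ring
  · filter_upwards [hr] with t hrt ht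
    simp only [tauApp, slSystem_apply]
    field_simp [hrt ht]
    ring

end SturmLiouville

section Disconjugacy

variable {a b : EReal} {p q r s : ℝ → ℝ} {lam : ℝ}

theorem SLH.exists_isSolutionWith (H : SLH a b p q r s) (lam : ℝ) {x₀ : ℝ} (hx₀ : x₀ ∈ EI a b)
    (u₀ v₀ : ℝ) : ∃ u ud u1 u1d, IsSolutionWith (EI a b) p q r s lam u ud u1 u1d ∧
      u x₀ = u₀ ∧ u1 x₀ = v₀ := by
  obtain ⟨w, hw₀, hw⟩ := exists_isLinearODESolutionOn (ordConnected_EI a b)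
    (locallyIntegrableOn_slSystem (lam := lam) H.invp_loc H.q_loc H.r_loc H.s_loc) hx₀ (u₀, v₀)
  exact ⟨_, _, _, _, hw.isSolutionWith (H.ppos.mono fun t h ht => (h ht).ne')
    (H.rpos.mono fun t h ht => (h ht).ne'), by simp [hw₀], by simp [hw₀]⟩

theorem Disconjugate.eqOn_of_eq_of_eq {I : Set ℝ} (hD : Disconjugate I p q r s lam)
    {u v : ℝ → ℝ} (hu : IsSolution I p q r s lam u) (hv : IsSolution I p q r s lam v)
    {x₁ x₂ : ℝ} (hx₁ : x₁ ∈ I) (hx₂ : x₂ ∈ I) (hne : x₁ ≠ x₂) (h₁ : u x₁ = v x₁)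
    (h₂ : u x₂ = v x₂) : EqOn u v I := by
  intro t ht
  by_contra huv
  exact hne (hD _ (hu.const_mul_add_const_mul hv 1 (-1)) ⟨t, ht, fun h => huv (by linarith)⟩
    x₁ hx₁ x₂ hx₂ (by rw [h₁]; ring) (by rw [h₂]; ring))

theorem Disconjugate.exists_isSolution_eq_zero_ne_zero (hD : Disconjugate (EI a b) p q r s lam)
    (H : SLH a b p q r s) {x₁ x₂ : ℝ} (hx₁ : x₁ ∈ EI a b) (hx₂ : x₂ ∈ EI a b) (hne : x₁ ≠ x₂) :
    ∃ y, IsSolution (EI a b) p q r s lam y ∧ y x₁ = 0 ∧ y x₂ ≠ 0 := by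
  obtain ⟨y, yd, y1, y1d, hy, hyx₁, hy1x₁⟩ := H.exists_isSolutionWith lam hx₁ 0 1
  refine ⟨y, ⟨_, _, _, hy⟩, hyx₁, fun hyx₂ => ?_⟩
  have hy0 : EqOn y 0 (EI a b) := fun t ht => by_contra fun hyt =>
    hne (hD y ⟨_, _, _, hy⟩ ⟨t, ht, hyt⟩ x₁ hx₁ x₂ hx₂ hyx₁ hyx₂)
  simpa [hy1x₁] using hy.1.quasiDeriv_eqOn_zero (isOpen_EI a b) hy0 hx₁

end Disconjugacy

/-- Theorem 4.2 (i) ⇔ (ii): `τ - λ` is disconjugate on `(a,b)` if and only if for every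
pair of distinct points `x₁, x₂ ∈ (a,b)` and arbitrary values `u₁, u₂ ∈ ℝ` there exists a
unique real-valued solution `u*` of `(τ - λ) u = 0` on `(a,b)` with `u*(x₁) = u₁` and
`u*(x₂) = u₂` (uniqueness as functions on `(a,b)`). -/
theorem disconjugate_iff_two_point_interpolation
    (a b : EReal) (p q r s : ℝ → ℝ) (H : SLH a b p q r s) (lam : ℝ) :
    Disconjugate (EI a b) p q r s lam ↔
      ∀ x₁ ∈ EI a b, ∀ x₂ ∈ EI a b, x₁ ≠ x₂ → ∀ u₁ u₂ : ℝ,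
        ∃ ustar : ℝ → ℝ, IsSolution (EI a b) p q r s lam ustar ∧
          ustar x₁ = u₁ ∧ ustar x₂ = u₂ ∧
          ∀ v : ℝ → ℝ, IsSolution (EI a b) p q r s lam v →
            v x₁ = u₁ → v x₂ = u₂ → Set.EqOn v ustar (EI a b) := by
  constructor
  · intro hD x₁ hx₁ x₂ hx₂ hne u₁ u₂
    obtain ⟨y₁, y₁d, y₁1, y₁1d, hy₁, hy₁x₁, -⟩ := H.exists_isSolutionWith lam hx₁ 1 0
    obtain ⟨y₂, hy₂, hy₂x₁, hy₂x₂⟩ := hD.exists_isSolution_eq_zero_ne_zero H hx₁ hx₂ hne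
    have hsol := IsSolution.const_mul_add_const_mul ⟨y₁d, y₁1, y₁1d, hy₁⟩ hy₂ u₁
      ((u₂ - u₁ * y₁ x₂) / y₂ x₂)
    refine ⟨_, hsol, by simp [hy₁x₁, hy₂x₁], by field_simp; ring, fun v hv hv₁ hv₂ =>
      hD.eqOn_of_eq_of_eq hv hsol hx₁ hx₂ hne ?_ ?_⟩
    · simp [hv₁, hy₁x₁, hy₂x₁]
    · rw [hv₂]; field_simp; ring
  · rintro hI u hu ⟨z, hz, huz⟩ x hx y hy hux huy
    by_contra hne
    obtain ⟨ustar, -, -, -, huniq⟩ := hI x hx y hy hne 0 0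
    exact huz ((huniq u hu hux huy hz).trans (huniq _ isSolution_zero rfl rfl hz).symm)
end

section
/- Reduction of order (Lemma 4.1): Assume Hypothesis (H). Suppose λ ∈ ℝ, (c,d) ⊆ (a,b), and x₀ ∈ (c,d). If u₁ is a solution of (τ − λ)u = 0 on (c,d) with u₁(x) ≠ 0 for all x ∈ (c,d), then the function u₂ defined by u₂(x) := u₁(x)·∫_{x₀}^{x} dt/(p(t)·u₁(t)²) for x ∈ (c,d) is also a solution of (τ − λ)u = 0 on (c,d). Moreover, u₁ and u₂ are linearly independent on (c,d). -/
open MeasureTheory Set Filter intervalIntegral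

/-!
Reduction of order. Put `m x = ∫ t in x₀..x, 1 / (p t * u₁ t ^ 2)`, so `m' = 1 / (p u₁²)` a.e.
For `u₂ = u₁ m` one gets `u₂' + s u₂ = m (u₁' + s u₁) + 1 / (p u₁)`, hence the quasi-derivative
`u₂^[1] = m u₁^[1] + 1 / u₁`; differentiating once more, all terms without `m` cancel and
`τ u₂ = m τ u₁ = λ u₂`. This needs the product and reciprocal rules for locally absolutely
continuous functions, which follow from the fundamental theorem of calculus for absolutely
continuous functions. Finally `m x₀ = 0` while `m > 0` to the right of `x₀` because `p > 0` a.e.,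
so `c₁ u₁ + c₂ u₂ = 0` forces `c₁ = 0` at `x₀` and then `c₂ = 0`.
-/

open Topology

instance EI.ordConnected (a b : EReal) : (EI a b).OrdConnected :=
  ⟨fun _ hx _ hy _ ht =>
    ⟨hx.1.trans_le (EReal.coe_le_coe_iff.2 ht.1), (EReal.coe_le_coe_iff.2 ht.2).trans_lt hy.2⟩⟩

theorem intervalIntegral_pos_of_ae_pos {f : ℝ → ℝ} {a b : ℝ} (hab : a < b)
    (hfi : IntervalIntegrable f volume a b) (hpos : ∀ᵐ t, t ∈ Ioc a b → 0 < f t) :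
    0 < ∫ t in a..b, f t := by
  have hpos' : ∀ᵐ t ∂volume.restrict (Ioc a b), 0 < f t :=
    (ae_restrict_iff' measurableSet_Ioc).2 hpos
  rw [intervalIntegral.integral_of_le hab.le,
    setIntegral_pos_iff_support_of_nonneg_ae (hpos'.mono fun _ ht => ht.le) hfi.1]
  have hsupp : Function.support f =ᵐ[volume.restrict (Ioc a b)] (univ : Set ℝ) :=
    ae_eq_univ.2 (ae_iff.1 (hpos'.mono fun _ ht => ht.ne'))
  rw [← Measure.restrict_apply' measurableSet_Ioc, measure_congr hsupp,
    Measure.restrict_apply_univ, Real.volume_Ioc]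
  simpa using hab

namespace AbsolutelyContinuousOnInterval

variable {f g : ℝ → ℝ} {a b : ℝ}

theorem congr (hf : AbsolutelyContinuousOnInterval f a b) (hfg : EqOn f g (uIcc a b)) :
    AbsolutelyContinuousOnInterval g a b := by
  unfold AbsolutelyContinuousOnInterval at hf ⊢
  refine hf.congr' ?_
  rw [EventuallyEq, eventually_inf_principal]
  filter_upwards with E hE
  exact Finset.sum_congr rfl fun i hi => by rw [hfg (hE.1 i hi).1, hfg (hE.1 i hi).2]

theorem fun_inv (hf : AbsolutelyContinuousOnInterval f a b) (hne : ∀ x ∈ uIcc a b, f x ≠ 0) :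
    AbsolutelyContinuousOnInterval (fun x => (f x)⁻¹) a b := by
  obtain ⟨x₀, hx₀, hmin⟩ :=
    isCompact_uIcc.exists_isMinOn nonempty_uIcc (continuous_abs.comp_continuousOn hf.continuousOn)
  have hδ : 0 < |f x₀| := abs_pos.2 (hne x₀ hx₀)
  -- `|(f x)⁻¹ - (f y)⁻¹| ≤ |f x₀|⁻² |f x - f y|` on `[[a, b]]`, where `|f|` is smallest at `x₀`.
  unfold AbsolutelyContinuousOnInterval at hf ⊢
  refine squeeze_zero' (Eventually.of_forall fun _ => Finset.sum_nonneg fun _ _ => dist_nonneg)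
    ?_ (by simpa using hf.const_mul (|f x₀| ^ 2)⁻¹)
  rw [eventually_inf_principal]
  filter_upwards with E hE
  rw [Finset.mul_sum]
  gcongr with i hi
  obtain ⟨hx, hy⟩ := hE.1 i hi
  rw [dist_inv_inv₀ (hne _ hx) (hne _ hy), div_eq_inv_mul, Real.norm_eq_abs, Real.norm_eq_abs, sq]
  exact mul_le_mul_of_nonneg_right
    (inv_anti₀ (by positivity) (mul_le_mul (hmin hx) (hmin hy) hδ.le (abs_nonneg _))) dist_nonneg

end AbsolutelyContinuousOnInterval

namespace HasAEDerivOn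

variable {I : Set ℝ} {f g fd gd : ℝ → ℝ} {x y : ℝ}

theorem eqOn_add_integral [I.OrdConnected] (hf : HasAEDerivOn I f fd) (hx : x ∈ I) (hy : y ∈ I) :
    EqOn f (fun t => f x + ∫ s in x..t, fd s) (uIcc x y) := fun t ht => by
  have := (hf x hx t (OrdConnected.uIcc_subset inferInstance hx hy ht)).2
  simp only
  linarith

theorem absolutelyContinuousOnInterval [I.OrdConnected] (hf : HasAEDerivOn I f fd) (hx : x ∈ I)
    (hy : y ∈ I) : AbsolutelyContinuousOnInterval f x y :=
  ((LipschitzWith.const (f x)).lipschitzOnWith.absolutelyContinuousOnInterval.fun_add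
    ((hf x hx y hy).1.absolutelyContinuousOnInterval_intervalIntegral left_mem_uIcc)).congr
    (hf.eqOn_add_integral hx hy).symm

theorem ae_hasDerivAt [I.OrdConnected] (hf : HasAEDerivOn I f fd) (hx : x ∈ I) (hy : y ∈ I) :
    ∀ᵐ t, t ∈ uIcc x y → HasDerivAt f (fd t) t := by
  filter_upwards [(hf x hx y hy).1.ae_hasDerivAt_integral, Measure.ae_ne volume x,
    Measure.ae_ne volume y] with t hderiv htx hty ht
  have hnhds : uIcc x y ∈ 𝓝 t := by
    rcases le_total x y with h | h
    · rw [uIcc_of_le h] at ht ⊢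
      exact Icc_mem_nhds (ht.1.lt_of_ne' htx) (ht.2.lt_of_ne hty)
    · rw [uIcc_of_ge h] at ht ⊢
      exact Icc_mem_nhds (ht.1.lt_of_ne' hty) (ht.2.lt_of_ne htx)
  exact ((hderiv ht x left_mem_uIcc).const_add (f x)).congr_of_eventuallyEq
    (eventually_of_mem hnhds (hf.eqOn_add_integral hx hy))

theorem of_absolutelyContinuousOnInterval
    (hac : ∀ x ∈ I, ∀ y ∈ I, AbsolutelyContinuousOnInterval f x y)
    (hd : ∀ x ∈ I, ∀ y ∈ I, ∀ᵐ t, t ∈ uIcc x y → HasDerivAt f (fd t) t) :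
    HasAEDerivOn I f fd := by
  intro x hx y hy
  have hderiv : ∀ᵐ t, t ∈ uIoc x y → deriv f t = fd t := by
    filter_upwards [hd x hx y hy] with t ht htI using (ht (uIoc_subset_uIcc htI)).deriv
  refine ⟨(hac x hx y hy).intervalIntegrable_deriv.congr_ae ?_, ?_⟩
  · exact (ae_restrict_iff' measurableSet_uIoc).2 hderiv
  · rw [← (hac x hx y hy).integral_deriv_eq_sub]
    exact intervalIntegral.integral_congr_ae hderiv

theorem add [I.OrdConnected] (hf : HasAEDerivOn I f fd) (hg : HasAEDerivOn I g gd) :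
    HasAEDerivOn I (fun t => f t + g t) (fun t => fd t + gd t) :=
  of_absolutelyContinuousOnInterval
    (fun _ hx _ hy => (hf.absolutelyContinuousOnInterval hx hy).fun_add
      (hg.absolutelyContinuousOnInterval hx hy))
    fun _ hx _ hy => by
      filter_upwards [hf.ae_hasDerivAt hx hy, hg.ae_hasDerivAt hx hy] with t hft hgt ht
      exact (hft ht).add (hgt ht)

theorem mul [I.OrdConnected] (hf : HasAEDerivOn I f fd) (hg : HasAEDerivOn I g gd) :
    HasAEDerivOn I (fun t => f t * g t) (fun t => fd t * g t + f t * gd t) :=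
  of_absolutelyContinuousOnInterval
    (fun _ hx _ hy => (hf.absolutelyContinuousOnInterval hx hy).fun_mul
      (hg.absolutelyContinuousOnInterval hx hy))
    fun _ hx _ hy => by
      filter_upwards [hf.ae_hasDerivAt hx hy, hg.ae_hasDerivAt hx hy] with t hft hgt ht
      exact (hft ht).mul (hgt ht)

theorem inv [I.OrdConnected] (hf : HasAEDerivOn I f fd) (hne : ∀ t ∈ I, f t ≠ 0) :
    HasAEDerivOn I (fun t => (f t)⁻¹) (fun t => -fd t / f t ^ 2) :=
  of_absolutelyContinuousOnInterval
    (fun _ hx _ hy => (hf.absolutelyContinuousOnInterval hx hy).fun_inv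
      fun t ht => hne t (OrdConnected.uIcc_subset inferInstance hx hy ht))
    fun _ hx _ hy => by
      filter_upwards [hf.ae_hasDerivAt hx hy] with t hft ht
      exact (hft ht).inv (hne t (OrdConnected.uIcc_subset inferInstance hx hy ht))

end HasAEDerivOn

theorem hasAEDerivOn_intervalIntegral {I : Set ℝ} {g : ℝ → ℝ} {x₀ : ℝ} (hx₀ : x₀ ∈ I)
    (hg : ∀ x ∈ I, ∀ y ∈ I, IntervalIntegrable g volume x y) :
    HasAEDerivOn I (fun x => ∫ t in x₀..x, g t) g := fun x hx y hy =>
  ⟨hg x hx y hy, intervalIntegral.integral_interval_sub_left (hg x₀ hx₀ y hy) (hg x₀ hx₀ x hx)⟩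

theorem hasAEDerivOn_integral_one_div_mul_sq {I : Set ℝ} [I.OrdConnected] {p u ud : ℝ → ℝ}
    (hp : LocallyIntegrableOn (fun t => 1 / p t) I volume) (hu : HasAEDerivOn I u ud)
    (hne : ∀ t ∈ I, u t ≠ 0) {x₀ : ℝ} (hx₀ : x₀ ∈ I) :
    HasAEDerivOn I (fun x => ∫ t in x₀..x, 1 / (p t * u t ^ 2)) fun t => 1 / (p t * u t ^ 2) := by
  refine hasAEDerivOn_intervalIntegral hx₀ fun x hx y hy => ?_
  have hxy := OrdConnected.uIcc_subset inferInstance hx hy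
  have hpxy : IntervalIntegrable (fun t => 1 / p t) volume x y :=
    (hp.integrableOn_compact_subset hxy isCompact_uIcc).intervalIntegrable
  convert hpxy.mul_continuousOn (((hu.absolutelyContinuousOnInterval hx hy).continuousOn.pow 2).inv₀
    fun t ht => pow_ne_zero 2 (hne t (hxy ht))) using 2 with t
  rw [one_div, one_div, mul_inv]; rfl

theorem IsSolutionWith.isSolution_mul {I : Set ℝ} [I.OrdConnected] {p q r s : ℝ → ℝ} {lam : ℝ}
    {u ud u1 u1d m : ℝ → ℝ} (hu : IsSolutionWith I p q r s lam u ud u1 u1d)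
    (hne : ∀ t ∈ I, u t ≠ 0) (hp : ∀ᵐ t, t ∈ I → p t ≠ 0)
    (hm : HasAEDerivOn I m fun t => 1 / (p t * u t ^ 2)) :
    IsSolution I p q r s lam fun t => u t * m t := by
  obtain ⟨⟨hud, hu1, hu1d⟩, hτ⟩ := hu
  refine ⟨_, fun t => u1 t * m t + (u t)⁻¹, _,
    ⟨⟨hud.mul hm, ?_, (hu1d.mul hm).add (hud.inv hne)⟩, ?_⟩⟩
  · filter_upwards [hp, hu1] with t hpt hu1t htI
    rw [hu1t htI]
    field_simp [hpt htI, hne t htI]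
    ring
  · filter_upwards [hp, hu1, hτ] with t hpt hu1t hτt htI
    have key : -(u1d t * m t + u1 t * (1 / (p t * u t ^ 2)) + -ud t / u t ^ 2) +
        s t * (u1 t * m t + (u t)⁻¹) + q t * (u t * m t) =
        m t * (-u1d t + s t * u1 t + q t * u t) := by
      rw [hu1t htI]
      field_simp [hpt htI, hne t htI]
      ring
    simp only [tauApp] at hτt ⊢
    linear_combination m t * hτt htI + 1 / r t * key

theorem linIndepOn_mul {I : Set ℝ} {u m : ℝ → ℝ} (hu : ∀ x ∈ I, u x ≠ 0) {x₀ x₁ : ℝ}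
    (hx₀ : x₀ ∈ I) (hx₁ : x₁ ∈ I) (hm₀ : m x₀ = 0) (hm₁ : m x₁ ≠ 0) :
    LinIndepOn I u fun x => u x * m x := by
  intro c₁ c₂ h
  have hc₁ : c₁ = 0 := by simpa [hm₀, hu x₀ hx₀] using h x₀ hx₀
  refine ⟨hc₁, ?_⟩
  simpa [hc₁, hu x₁ hx₁, hm₁] using h x₁ hx₁

/-- Lemma 4.1 (reduction of order): if `u₁` is a nonvanishing solution of `(τ - λ) u = 0`
on `(c,d) ⊆ (a,b)` and `x₀ ∈ (c,d)`, then `u₂(x) = u₁(x) ∫_{x₀}^x dt/(p(t) u₁(t)²)` is also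
a solution on `(c,d)`, and `u₁, u₂` are linearly independent on `(c,d)`. -/
theorem reduction_of_order
    (a b : EReal) (p q r s : ℝ → ℝ) (H : SLH a b p q r s) (lam : ℝ)
    (c d : EReal) (hsub : EI c d ⊆ EI a b) (x₀ : ℝ) (hx₀ : x₀ ∈ EI c d)
    (u₁ : ℝ → ℝ) (hu₁ : IsSolution (EI c d) p q r s lam u₁)
    (hne : ∀ x ∈ EI c d, u₁ x ≠ 0) :
    IsSolution (EI c d) p q r s lam
        (fun x => u₁ x * ∫ t in x₀..x, 1 / (p t * u₁ t ^ 2)) ∧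
      LinIndepOn (EI c d) u₁
        (fun x => u₁ x * ∫ t in x₀..x, 1 / (p t * u₁ t ^ 2)) := by
  obtain ⟨ud, u1, u1d, hsol⟩ := hu₁
  have hp : ∀ᵐ t, t ∈ EI c d → 0 < p t := H.ppos.mono fun t ht htI => ht (hsub htI)
  have hm := hasAEDerivOn_integral_one_div_mul_sq (H.invp_loc.mono_set hsub) hsol.1.1 hne hx₀
  refine ⟨hsol.isSolution_mul hne (hp.mono fun t ht htI => (ht htI).ne') hm, ?_⟩
  obtain ⟨x₁, hx₀x₁, hx₁d⟩ := EReal.exists_between_coe_real hx₀.2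
  have hx₁ : x₁ ∈ EI c d := ⟨hx₀.1.trans hx₀x₁, hx₁d⟩
  refine linIndepOn_mul hne hx₀ hx₁ intervalIntegral.integral_same
    (intervalIntegral_pos_of_ae_pos (EReal.coe_lt_coe_iff.1 hx₀x₁) (hm x₀ hx₀ x₁ hx₁).1 ?_).ne'
  filter_upwards [hp] with t hpt ht
  have htI : t ∈ EI c d :=
    OrdConnected.uIcc_subset inferInstance hx₀ hx₁ (Icc_subset_uIcc (Ioc_subset_Icc_self ht))
  have := hpt htI
  have := hne t htI
  positivity
end
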